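/- For r ≤ s, the identity ∑_{2k ≤ s−r} (α_{r+2k})² · γ^{r+2k}_k = binom(s,r) holds, where (α_q)² = binom(s,q) · Γ(1/2+s)Γ(1+q)/(Γ(1/2+(q+s)/2)Γ(1+(q+s)/2)) and γ^q_k = (1/(4^k k!)) · (q!/(q−2k)!) · 1/((1−q)_k). -/

import Mathlib

/-!
Legendre's duplication formula gives `α_q² = binom(2s, s - q) 2^(q - s)`, and
`4^k γ^(r+2k)_k` is the `k`-th coefficient of `(1 - y)(1 + y)^(-(r+1))`. Hence, with `s = r + n`,
the sum is `2^(-n)` times the coefficient `c(r, n)` of `xⁿ` in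
`(1 - x²)(1 + x²)^(-(r+1))(1 + x)^(2(r+n))`. Writing `(1 + x)² = (1 + x²) + 2x` gives
`c(r, n + 1) = c(r - 1, n + 1) + 2 c(r, n)`, while `c(r, 0) = 1` and `c(0, n + 1) = 2 c(0, n)`
(the coefficient of `x^(n+1)` in `(1 - x)(1 + x)^(2n+1)` vanishes by symmetry), so
`c(r, n) = 2ⁿ binom(r + n, r)`.
-/

open Finset

noncomputable section

/-- Rising factorial (Pochhammer symbol) (x)_k = x(x+1)⋯(x+k−1). -/
def poch (x : ℝ) (k : ℕ) : ℝ := ∏ j ∈ Finset.range k, (x + j)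

/-- γ^q_k = (1/(4^k k!))·(q!/(q−2k)!)·1/((1−q)_k). -/
def gam (q k : ℕ) : ℝ :=
  1 / (4 ^ k * (Nat.factorial k : ℝ)) *
    ((Nat.factorial q : ℝ) / (Nat.factorial (q - 2 * k) : ℝ)) *
    (1 / poch (1 - (q : ℝ)) k)

/-- (α_q)² = binom(s,q)·Γ(1/2+s)Γ(1+q)/(Γ(1/2+(q+s)/2)Γ(1+(q+s)/2)). -/
def alphaSq (s q : ℕ) : ℝ :=
  (Nat.choose s q : ℝ) * Real.Gamma (1 / 2 + (s : ℝ)) * Real.Gamma (1 + (q : ℝ)) /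
    (Real.Gamma (1 / 2 + ((q : ℝ) + s) / 2) * Real.Gamma (1 + ((q : ℝ) + s) / 2))

open PowerSeries
open scoped Nat

lemma sum_filter_two_dvd_range_succ {M : Type*} [AddCommMonoid M] (f : ℕ → M) (n : ℕ) :
    ∑ i ∈ (range (n + 1)).filter (2 ∣ ·), f i = ∑ k ∈ range (n / 2 + 1), f (2 * k) := by
  refine sum_nbij' (· / 2) (2 * ·) ?_ ?_ ?_ ?_ ?_ <;> simp only [mem_filter, mem_range]
  any_goals omega
  rintro i ⟨-, hi⟩
  rw [Nat.mul_div_cancel' hi]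

section PowerSeries

variable {R : Type*} [CommRing R]

lemma one_add_X_mul_binomialSeries_neg_succ (t : ℕ) :
    (1 + X) * binomialSeries R (-(t + 1 : ℤ)) = binomialSeries R (-(t : ℤ)) := by
  have h := binomialSeries_nat (R := ℤ) (A := R) 1
  rw [pow_one, Nat.cast_one] at h
  rw [← h, ← binomialSeries_add]
  ring_nf

lemma coeff_binomialSeries_neg_succ (t k : ℕ) :
    coeff k (binomialSeries R (-(t + 1 : ℤ))) = (-1) ^ k * (t + k).choose t := by
  rw [show (-(t + 1 : ℤ)) = -((t + 1 : ℕ) : ℤ) by push_cast; ring, ← rescale_neg_one_invOneSubPow]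
  simp [invOneSubPow_val_succ_eq_mk_add_choose]

lemma coeff_one_add_X_pow (N m : ℕ) : coeff m ((1 + X : R⟦X⟧) ^ N) = N.choose m := by
  rw [← binomialSeries_nat (R := ℤ), binomialSeries_coeff, Ring.choose_natCast, natCast_zsmul,
    nsmul_one]

lemma coeff_expand_two_mul_one_add_X_pow (V : R⟦X⟧) (N n : ℕ) :
    coeff n (expand 2 two_ne_zero V * (1 + X) ^ N)
      = ∑ k ∈ range (n / 2 + 1), coeff k V * N.choose (n - 2 * k) := by
  rw [coeff_mul, Nat.sum_antidiagonal_eq_sum_range_succ_mk]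
  simp only [coeff_expand, ite_mul, zero_mul]
  rw [← sum_filter, sum_filter_two_dvd_range_succ]
  simp only [Nat.mul_div_cancel_left _ two_pos, coeff_one_add_X_pow]

variable (R) in
def kernelCoeff (r n : ℕ) : R :=
  coeff n (expand 2 two_ne_zero ((1 - X) * binomialSeries R (-(r + 1 : ℤ))) *
    (1 + X) ^ (2 * (r + n)))

lemma kernelCoeff_zero_right (r : ℕ) : kernelCoeff R r 0 = 1 := by
  simp [kernelCoeff, coeff_zero_eq_constantCoeff_apply]

lemma kernelCoeff_succ (r n : ℕ) :
    kernelCoeff R r (n + 1) =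
      coeff (n + 1) (expand 2 two_ne_zero ((1 - X) * binomialSeries R (-(r : ℤ))) *
        (1 + X) ^ (2 * (r + n))) + 2 * kernelCoeff R r n := by
  set E := expand 2 two_ne_zero (R := R)
  have hsplit : E ((1 - X) * binomialSeries R (-(r + 1 : ℤ))) * (1 + X) ^ (2 * (r + (n + 1)))
      = E ((1 - X) * binomialSeries R (-(r : ℤ))) * (1 + X) ^ (2 * (r + n))
        + X * (C (2 : R) * (E ((1 - X) * binomialSeries R (-(r + 1 : ℤ))) *
          (1 + X) ^ (2 * (r + n)))) := by
    rw [← one_add_X_mul_binomialSeries_neg_succ]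
    simp only [E, map_mul, map_sub, map_add, map_one, map_ofNat, expand_X]
    ring
  rw [kernelCoeff, hsplit, map_add, coeff_succ_X_mul, coeff_C_mul, kernelCoeff]

lemma kernelCoeff_zero_succ (n : ℕ) : kernelCoeff R 0 (n + 1) = 2 * kernelCoeff R 0 n := by
  rw [kernelCoeff_succ, Nat.cast_zero, neg_zero, binomialSeries_zero, mul_one, zero_add,
    add_eq_right]
  have hfactor : expand 2 two_ne_zero (1 - X : R⟦X⟧) * (1 + X) ^ (2 * n)
      = (1 + X) ^ (2 * n + 1) - X * (1 + X) ^ (2 * n + 1) := by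
    simp only [map_sub, map_one, expand_X]
    ring
  rw [hfactor, map_sub, coeff_succ_X_mul, coeff_one_add_X_pow, coeff_one_add_X_pow,
    Nat.choose_symm_half, sub_self]

lemma kernelCoeff_succ_succ (r n : ℕ) :
    kernelCoeff R (r + 1) (n + 1) = kernelCoeff R r (n + 1) + 2 * kernelCoeff R (r + 1) n := by
  rw [kernelCoeff_succ, kernelCoeff, show r + 1 + n = r + (n + 1) by ring]
  push_cast
  rfl

lemma kernelCoeff_eq (r n : ℕ) : kernelCoeff R r n = 2 ^ n * (r + n).choose r := by
  induction r generalizing n with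
  | zero =>
    induction n with
    | zero => simp [kernelCoeff_zero_right]
    | succ n ih =>
      rw [kernelCoeff_zero_succ, ih]
      simp only [zero_add, Nat.choose_zero_right, Nat.cast_one]
      ring
  | succ r ihr =>
    induction n with
    | zero => simp [kernelCoeff_zero_right]
    | succ n ihn =>
      rw [kernelCoeff_succ_succ, ihr, ihn, show r + 1 + (n + 1) = r + (n + 1) + 1 by ring,
        Nat.choose_succ_succ', show r + 1 + n = r + (n + 1) by ring]
      push_cast
      ring

end PowerSeries

open Real in
lemma Gamma_half_add_half_mul_Gamma_one_add_half (n : ℕ) :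
    Gamma (1 / 2 + n / 2) * Gamma (1 + n / 2) = n ! * √π / 2 ^ n := by
  have h := Gamma_mul_Gamma_add_half (1 / 2 + n / 2)
  rw [show (1 / 2 + n / 2 + 1 / 2 : ℝ) = 1 + n / 2 by ring,
    show 2 * (1 / 2 + n / 2 : ℝ) = n + 1 by ring, Gamma_nat_eq_factorial,
    show (1 - (n + 1) : ℝ) = -n by ring, rpow_neg zero_le_two, rpow_natCast] at h
  rw [h, div_eq_mul_inv]
  ring

lemma alphaSq_eq {s q : ℕ} (h : q ≤ s) :
    alphaSq s q = (2 * s).choose (s - q) * 2 ^ q / 2 ^ s := by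
  have hs := Gamma_half_add_half_mul_Gamma_one_add_half (2 * s)
  have hqs := Gamma_half_add_half_mul_Gamma_one_add_half (q + s)
  rw [show ((2 * s : ℕ) : ℝ) / 2 = s by push_cast; ring, add_comm 1 (s : ℝ),
    Real.Gamma_nat_eq_factorial] at hs
  push_cast at hqs
  rw [alphaSq, hqs, add_comm 1 (q : ℝ), Real.Gamma_nat_eq_factorial,
    eq_div_of_mul_eq (by positivity) hs, Nat.cast_choose ℝ h,
    Nat.cast_choose ℝ (show s - q ≤ 2 * s by omega), show 2 * s - (s - q) = q + s by omega]
  field_simp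
  ring

lemma poch_neg_natCast {m k : ℕ} (h : k ≤ m) : poch (-m) k = (-1) ^ k * m.descFactorial k := by
  have hneg := prod_neg (s := range k) fun j ↦ ((m - j : ℕ) : ℝ)
  rw [card_range] at hneg
  rw [poch, Nat.descFactorial_eq_prod_range, Nat.cast_prod, ← hneg]
  refine prod_congr rfl fun j hj => ?_
  rw [Nat.cast_sub (by rw [mem_range] at hj; omega)]
  ring

lemma four_pow_mul_gam_succ (r i : ℕ) :
    4 ^ (i + 1) * gam (r + 2 * (i + 1)) (i + 1)
      = (-1) ^ (i + 1) * ((r + i + 1).choose r + (r + i).choose r) := by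
  have hpoch := poch_neg_natCast (show i + 1 ≤ r + 2 * i + 1 by omega)
  have hdesc := Nat.factorial_mul_descFactorial (show i + 1 ≤ r + 2 * i + 1 by omega)
  rw [show r + 2 * i + 1 - (i + 1) = r + i by omega] at hdesc
  have hD : ((r + 2 * i + 1).descFactorial (i + 1) : ℝ) ≠ 0 := by
    exact_mod_cast Nat.descFactorial_eq_zero_iff_lt.not.mpr (by omega)
  rw [gam, show r + 2 * (i + 1) - 2 * (i + 1) = r by omega,
    show (1 : ℝ) - ((r + 2 * (i + 1) : ℕ) : ℝ) = -((r + 2 * i + 1 : ℕ) : ℝ) by push_cast; ring,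
    hpoch, Nat.cast_choose ℝ (show r ≤ r + i + 1 by omega),
    Nat.cast_choose ℝ (show r ≤ r + i by omega), show r + i + 1 - r = i + 1 by omega,
    show r + i - r = i by omega, show r + 2 * (i + 1) = (r + 2 * i + 1) + 1 by omega,
    Nat.factorial_succ (r + 2 * i + 1), ← hdesc, Nat.factorial_succ (r + i),
    Nat.factorial_succ i, one_div ((-1) ^ (i + 1) * _), mul_inv, ← inv_pow, inv_neg, inv_one]
  field_simp
  push_cast
  ring

lemma four_pow_mul_gam_eq_coeff (r k : ℕ) :
    4 ^ k * gam (r + 2 * k) k = coeff k ((1 - X) * binomialSeries ℝ (-(r + 1 : ℤ))) := by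
  cases k with
  | zero => simp [gam, poch, coeff_zero_eq_constantCoeff_apply, Nat.factorial_ne_zero]
  | succ i =>
    rw [four_pow_mul_gam_succ, sub_mul, one_mul, map_sub, coeff_succ_X_mul,
      coeff_binomialSeries_neg_succ, coeff_binomialSeries_neg_succ, ← add_assoc]
    ring

lemma alphaSq_mul_gam {r n k : ℕ} (hk : 2 * k ≤ n) :
    alphaSq (r + n) (r + 2 * k) * gam (r + 2 * k) k
      = 2 ^ r / 2 ^ (r + n) * (coeff k ((1 - X) * binomialSeries ℝ (-(r + 1 : ℤ))) *
        (2 * (r + n)).choose (n - 2 * k)) := by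
  rw [alphaSq_eq (by omega), ← four_pow_mul_gam_eq_coeff, show r + n - (r + 2 * k) = n - 2 * k by
    omega, pow_add 2 r, pow_mul, show (2 : ℝ) ^ 2 = 4 by norm_num]
  ring

/-- For r ≤ s, ∑_{2k ≤ s−r} (α_{r+2k})² γ^{r+2k}_k = binom(s,r). -/
theorem stmt10 (s r : ℕ) (h : r ≤ s) :
    ∑ k ∈ Finset.range ((s - r) / 2 + 1), alphaSq s (r + 2 * k) * gam (r + 2 * k) k
      = (Nat.choose s r : ℝ) := by
  obtain ⟨n, rfl⟩ := Nat.exists_eq_add_of_le h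
  calc ∑ k ∈ range ((r + n - r) / 2 + 1), alphaSq (r + n) (r + 2 * k) * gam (r + 2 * k) k
      = 2 ^ r / 2 ^ (r + n) * ∑ k ∈ range (n / 2 + 1),
          coeff k ((1 - X) * binomialSeries ℝ (-(r + 1 : ℤ))) *
            ((2 * (r + n)).choose (n - 2 * k) : ℝ) := by
        rw [Nat.add_sub_cancel_left, mul_sum]
        exact sum_congr rfl fun k hk => alphaSq_mul_gam (by rw [mem_range] at hk; omega)
    _ = 2 ^ r / 2 ^ (r + n) * kernelCoeff ℝ r n := by
        rw [kernelCoeff, coeff_expand_two_mul_one_add_X_pow]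
    _ = (r + n).choose r := by
        rw [kernelCoeff_eq, pow_add]
        field_simp
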